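/- Let R be a subring of a division ring D, let M be a D-torsion-free left R-module of finite D-dimension, and let L be a nonzero R-submodule of M. Then dim_D(M/L) < dim_D M. Moreover, if dim_D L = 1, then dim_D(M/L) = dim_D M − 1. -/

import Mathlib

open scoped TensorProduct

universe u

/-- The balancing relations defining the tensor product `D ⊗_R M` over the (possibly
noncommutative) ring `R` as a quotient of `D ⊗_ℤ M`. -/
def tensorRel (D : Type u) [DivisionRing D] (R : Subring D)
    (M : Type u) [AddCommGroup M] [Module R M] : Submodule ℤ (D ⊗[ℤ] M) :=
  Submodule.span ℤ
    {x | ∃ (d : D) (r : R) (m : M), x = (d * (r : D)) ⊗ₜ[ℤ] m - d ⊗ₜ[ℤ] (r • m)}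

/-- The tensor product `D ⊗_R M` of the right `R`-module `D` and the left `R`-module `M`,
realized as the quotient of `D ⊗_ℤ M` by the balancing relations. -/
abbrev NCTensor (D : Type u) [DivisionRing D] (R : Subring D)
    (M : Type u) [AddCommGroup M] [Module R M] :=
  (D ⊗[ℤ] M) ⧸ tensorRel D R M

section

variable (D : Type u) [DivisionRing D] (R : Subring D)
variable (M : Type u) [AddCommGroup M] [Module R M]

/-- Left multiplication by `d : D` on `D ⊗_ℤ M`. -/
noncomputable def lmulAux (d : D) : (D ⊗[ℤ] M) →ₗ[ℤ] (D ⊗[ℤ] M) :=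
  TensorProduct.map ((AddMonoidHom.mulLeft d).toIntLinearMap) LinearMap.id

lemma lmulAux_rel (d : D) :
    tensorRel D R M ≤ (tensorRel D R M).comap (lmulAux D M d) := by
  rw [tensorRel, Submodule.span_le]
  rintro x ⟨a, r, m, rfl⟩
  apply Submodule.mem_comap.mpr
  refine Submodule.subset_span ⟨d * a, r, m, ?_⟩
  rw [map_sub, mul_assoc]
  exact congrArg₂ (· - ·) (TensorProduct.map_tmul _ _ _ _) (TensorProduct.map_tmul _ _ _ _)

/-- Left multiplication by `d : D` on `D ⊗_R M`. -/
noncomputable def lmulQ (d : D) : NCTensor D R M →ₗ[ℤ] NCTensor D R M :=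
  Submodule.mapQ _ _ (lmulAux D M d) (lmulAux_rel D R M d)

lemma lmulQ_mk_tmul (d a : D) (m : M) :
    lmulQ D R M d (Submodule.Quotient.mk (a ⊗ₜ[ℤ] m)) =
      Submodule.Quotient.mk ((d * a) ⊗ₜ[ℤ] m) := by
  show Submodule.Quotient.mk (lmulAux D M d (a ⊗ₜ[ℤ] m)) = _
  exact congrArg (Submodule.Quotient.mk (p := tensorRel D R M)) (TensorProduct.map_tmul _ _ a m)

lemma NCTensor.inductionOn {P : NCTensor D R M → Prop} (x : NCTensor D R M)
    (zero : P 0)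
    (tmul : ∀ (a : D) (m : M), P (Submodule.Quotient.mk (a ⊗ₜ[ℤ] m)))
    (add : ∀ x y, P x → P y → P (x + y)) : P x := by
  obtain ⟨y, rfl⟩ := Submodule.Quotient.mk_surjective _ x
  induction y using TensorProduct.induction_on with
  | zero => simpa using zero
  | tmul a m => exact tmul a m
  | add y z hy hz =>
      rw [Submodule.Quotient.mk_add]
      exact add _ _ hy hz

noncomputable instance : SMul D (NCTensor D R M) :=
  ⟨fun d x => lmulQ D R M d x⟩

lemma nct_smul_def (d : D) (x : NCTensor D R M) : d • x = lmulQ D R M d x := rfl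

/-- The left `D`-module structure on `D ⊗_R M`. -/
noncomputable instance : Module D (NCTensor D R M) where
  one_smul x := by
    refine NCTensor.inductionOn D R M (P := fun z => (1 : D) • z = z) x ?_ ?_ ?_
    · simp only [nct_smul_def, map_zero]
    · intro a m
      rw [nct_smul_def, lmulQ_mk_tmul, one_mul]
    · intro x y hx hy
      rw [nct_smul_def, map_add, ← nct_smul_def, ← nct_smul_def, hx, hy]
  mul_smul d e x := by
    refine NCTensor.inductionOn D R M (P := fun z => (d * e) • z = d • e • z) x ?_ ?_ ?_
    · simp only [nct_smul_def, map_zero]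
    · intro a m
      simp only [nct_smul_def, lmulQ_mk_tmul, mul_assoc]
    · intro x y hx hy
      simp only [nct_smul_def, map_add] at hx hy ⊢
      rw [hx, hy]
  smul_zero d := map_zero (lmulQ D R M d)
  smul_add d x y := map_add (lmulQ D R M d) x y
  add_smul d e x := by
    refine NCTensor.inductionOn D R M (P := fun z => (d + e) • z = d • z + e • z) x ?_ ?_ ?_
    · simp only [nct_smul_def, map_zero, add_zero]
    · intro a m
      simp only [nct_smul_def, lmulQ_mk_tmul, add_mul]
      rw [TensorProduct.add_tmul, Submodule.Quotient.mk_add]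
    · intro x y hx hy
      simp only [nct_smul_def, map_add] at hx hy ⊢
      rw [hx, hy]
      abel
  zero_smul x := by
    refine NCTensor.inductionOn D R M (P := fun z => (0 : D) • z = 0) x ?_ ?_ ?_
    · simp only [nct_smul_def, map_zero]
    · intro a m
      rw [nct_smul_def, lmulQ_mk_tmul, zero_mul, TensorProduct.zero_tmul,
        Submodule.Quotient.mk_zero]
    · intro x y hx hy
      rw [nct_smul_def, map_add, ← nct_smul_def, ← nct_smul_def, hx, hy, add_zero]

/-- The canonical map `M → D ⊗_R M`, `m ↦ 1 ⊗ m`. -/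
noncomputable def toNCTensor : M → NCTensor D R M :=
  fun m => Submodule.Quotient.mk ((1 : D) ⊗ₜ[ℤ] m)

/-- A left `R`-module `M` is *`D`-torsion-free* if the canonical map `M → D ⊗_R M`,
`m ↦ 1 ⊗ m`, is injective. -/
def IsDTorsionFree : Prop := Function.Injective (toNCTensor D R M)

end

/-! Since `D ⊗_R -` is right exact, the kernel `K` of the surjection
`D ⊗_R M → D ⊗_R (M/L)` is the image of `D ⊗_R L`, and rank–nullity gives
`dim_D M = dim_D (M/L) + dim_D K`. For `0 ≠ x ∈ L`, torsion-freeness makes `1 ⊗ x` a nonzero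
element of `K`, so `dim_D K ≥ 1`, while `dim_D K ≤ dim_D L`. -/

namespace NCTensor

variable (D : Type u) [DivisionRing D] {R : Subring D}
variable {M N P : Type u} [AddCommGroup M] [Module R M] [AddCommGroup N] [Module R N]
  [AddCommGroup P] [Module R P]

noncomputable def lTensorInt (f : M →ₗ[R] N) : D ⊗[ℤ] M →ₗ[ℤ] D ⊗[ℤ] N :=
  f.toAddMonoidHom.toIntLinearMap.lTensor D

lemma lTensorInt_tmul (f : M →ₗ[R] N) (a : D) (m : M) :
    lTensorInt D f (a ⊗ₜ[ℤ] m) = a ⊗ₜ[ℤ] f m := rfl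

lemma lTensorInt_balancing (f : M →ₗ[R] N) (d : D) (r : R) (m : M) :
    lTensorInt D f ((d * (r : D)) ⊗ₜ[ℤ] m - d ⊗ₜ[ℤ] (r • m)) =
      (d * (r : D)) ⊗ₜ[ℤ] f m - d ⊗ₜ[ℤ] (r • f m) := by
  rw [map_sub, lTensorInt_tmul, lTensorInt_tmul, map_smul]

lemma tensorRel_le_comap (f : M →ₗ[R] N) :
    tensorRel D R M ≤ (tensorRel D R N).comap (lTensorInt D f) := by
  rw [tensorRel, Submodule.span_le]
  rintro x ⟨d, r, m, rfl⟩
  exact Submodule.subset_span ⟨d, r, f m, lTensorInt_balancing D f d r m⟩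

lemma tensorRel_le_map {g : M →ₗ[R] N} (hg : Function.Surjective g) :
    tensorRel D R N ≤ (tensorRel D R M).map (lTensorInt D g) := by
  rw [tensorRel, Submodule.span_le]
  rintro x ⟨d, r, n, rfl⟩
  obtain ⟨m, rfl⟩ := hg n
  exact ⟨_, Submodule.subset_span ⟨d, r, m, rfl⟩, lTensorInt_balancing D g d r m⟩

noncomputable def mapInt (f : M →ₗ[R] N) : NCTensor D R M →ₗ[ℤ] NCTensor D R N :=
  Submodule.mapQ _ _ (lTensorInt D f) (tensorRel_le_comap D f)

lemma mapInt_mk (f : M →ₗ[R] N) (x : D ⊗[ℤ] M) :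
    mapInt D f (Submodule.Quotient.mk x) = Submodule.Quotient.mk (lTensorInt D f x) := rfl

lemma mapInt_smul (f : M →ₗ[R] N) (d : D) (x : NCTensor D R M) :
    mapInt D f (d • x) = d • mapInt D f x := by
  refine NCTensor.inductionOn D R M (P := fun z => mapInt D f (d • z) = d • mapInt D f z)
    x ?_ ?_ ?_
  · simp only [smul_zero, map_zero]
  · intro a m
    rw [nct_smul_def, lmulQ_mk_tmul, mapInt_mk, mapInt_mk, lTensorInt_tmul, lTensorInt_tmul,
      nct_smul_def, lmulQ_mk_tmul]
  · intro x y hx hy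
    rw [smul_add, map_add, hx, hy, map_add, smul_add]

noncomputable def map (f : M →ₗ[R] N) : NCTensor D R M →ₗ[D] NCTensor D R N where
  toFun := mapInt D f
  map_add' := map_add _
  map_smul' := mapInt_smul D f

lemma map_toNCTensor (f : M →ₗ[R] N) (m : M) :
    map D f (toNCTensor D R M m) = toNCTensor D R N (f m) := rfl

lemma map_surjective {g : M →ₗ[R] N} (hg : Function.Surjective g) :
    Function.Surjective (map D g) := by
  intro y
  refine NCTensor.inductionOn D R N (P := fun z => ∃ x, map D g x = z) y ⟨0, map_zero _⟩ ?_ ?_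
  · intro a n
    obtain ⟨m, rfl⟩ := hg n
    exact ⟨Submodule.Quotient.mk (a ⊗ₜ[ℤ] m), rfl⟩
  · rintro _ _ ⟨x, rfl⟩ ⟨x', rfl⟩
    exact ⟨x + x', map_add _ _ _⟩

lemma exact_map {f : M →ₗ[R] N} {g : N →ₗ[R] P} (hfg : Function.Exact f g)
    (hg : Function.Surjective g) : Function.Exact (map D f) (map D g) := by
  have hexact : Function.Exact (lTensorInt D f) (lTensorInt D g) :=
    lTensor_exact D (f := f.toAddMonoidHom.toIntLinearMap) hfg hg
  intro y
  constructor
  -- Balancing relations of `D ⊗ P` lift along the surjection `D ⊗ N → D ⊗ P`.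
  · intro hy
    obtain ⟨y, rfl⟩ := Submodule.Quotient.mk_surjective _ y
    have hrel : lTensorInt D g y ∈ tensorRel D R P := (Submodule.Quotient.mk_eq_zero _).mp hy
    obtain ⟨z, hz, hzy⟩ := tensorRel_le_map D hg hrel
    obtain ⟨w, hw⟩ := (hexact (y - z)).mp (by rw [map_sub, hzy, sub_self])
    refine ⟨Submodule.Quotient.mk w, ?_⟩
    show Submodule.Quotient.mk (lTensorInt D f w) = _
    rw [hw, Submodule.Quotient.mk_sub, (Submodule.Quotient.mk_eq_zero _).mpr hz, sub_zero]
  · rintro ⟨x, rfl⟩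
    refine NCTensor.inductionOn D R M (P := fun z => map D g (map D f z) = 0) x
      (by simp only [map_zero]) ?_ ?_
    · intro a m
      show Submodule.Quotient.mk (a ⊗ₜ[ℤ] g (f m)) = 0
      rw [hfg.apply_apply_eq_zero, TensorProduct.tmul_zero, Submodule.Quotient.mk_zero]
    · intro x x' hx hx'
      rw [map_add, map_add, hx, hx', add_zero]

lemma toNCTensor_zero : toNCTensor D R M 0 = 0 := by
  rw [toNCTensor, TensorProduct.tmul_zero, Submodule.Quotient.mk_zero]

lemma toNCTensor_ne_zero (htf : IsDTorsionFree D R M) {m : M} (hm : m ≠ 0) :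
    toNCTensor D R M m ≠ 0 :=
  fun h => hm (htf (h.trans (toNCTensor_zero D).symm))

lemma one_le_rank_ker_map_mkQ (htf : IsDTorsionFree D R M) {L : Submodule R M} (hL : L ≠ ⊥) :
    1 ≤ Module.rank D (LinearMap.ker (map D L.mkQ)) := by
  obtain ⟨m, hmL, hm⟩ := (Submodule.ne_bot_iff L).mp hL
  have hmem : toNCTensor D R M m ∈ LinearMap.ker (map D L.mkQ) := by
    rw [LinearMap.mem_ker, map_toNCTensor, L.mkQ_apply, (Submodule.Quotient.mk_eq_zero L).mpr hmL,
      toNCTensor_zero]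
  have hne : (⟨_, hmem⟩ : LinearMap.ker (map D L.mkQ)) ≠ 0 :=
    Subtype.coe_ne_coe.mp (toNCTensor_ne_zero D htf hm)
  exact Cardinal.one_le_iff_pos.mpr (rank_pos_iff_exists_ne_zero.mpr ⟨_, hne⟩)

lemma rank_ker_map_mkQ_le (L : Submodule R M) :
    Module.rank D (LinearMap.ker (map D L.mkQ)) ≤ Module.rank D (NCTensor D R L) := by
  rw [(exact_map D (LinearMap.exact_subtype_mkQ L) L.mkQ_surjective).linearMap_ker_eq]
  exact rank_range_le _

end NCTensor

lemma Cardinal.lt_add_of_one_le_of_add_lt_aleph0 {a b : Cardinal} (h : a + b < Cardinal.aleph0)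
    (hb : 1 ≤ b) : a < a + b := by
  obtain ⟨m, rfl⟩ := Cardinal.lt_aleph0.mp (Cardinal.add_lt_aleph0_iff.mp h).1
  obtain ⟨n, rfl⟩ := Cardinal.lt_aleph0.mp (Cardinal.add_lt_aleph0_iff.mp h).2
  norm_cast at hb ⊢
  omega

/-- **Lemma (dimension drop for quotients of `D`-torsion-free modules).** Let `R` be a subring
of a division ring `D`, let `M` be a `D`-torsion-free left `R`-module of finite `D`-dimension,
and let `L` be a nonzero `R`-submodule of `M`.  Then `dim_D (M/L) < dim_D M`; moreover, if
`dim_D L = 1`, then `dim_D (M/L) = dim_D M − 1`. -/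
theorem rank_quotient_lt_of_isDTorsionFree (D : Type u) [DivisionRing D] (R : Subring D)
    (M : Type u) [AddCommGroup M] [Module R M]
    (htf : IsDTorsionFree D R M)
    (hfin : Module.rank D (NCTensor D R M) < Cardinal.aleph0)
    (L : Submodule R M) (hL : L ≠ ⊥) :
    Module.rank D (NCTensor D R (M ⧸ L)) < Module.rank D (NCTensor D R M) ∧
    (Module.rank D (NCTensor D R L) = 1 →
      Module.rank D (NCTensor D R (M ⧸ L)) + 1 = Module.rank D (NCTensor D R M)) := by
  have hrank := LinearMap.rank_eq_of_surjective (NCTensor.map_surjective D L.mkQ_surjective)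
  have hker := NCTensor.one_le_rank_ker_map_mkQ D htf hL
  refine ⟨?_, fun hL1 => ?_⟩
  · rw [hrank] at hfin ⊢
    exact Cardinal.lt_add_of_one_le_of_add_lt_aleph0 hfin hker
  · rw [hrank, le_antisymm (hL1 ▸ NCTensor.rank_ker_map_mkQ_le D L) hker]
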